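/- arXiv:2106.11935 — 2 statements merged into one kernel-verified Lean document; each statement's English description precedes it below -/
import Mathlib

section
/- Let gap_min > 0 and suppose for every threshold Δ ∈ (0, H] and every k, Σ_{j=1}^k 1[V*_h(s^j) − Q^{π^j}_h(s^j,a^j) ≥ Δ] ≤ C/Δ² for a constant C > 0. Suppose also every nonzero value of V*_h(s^j) − Q*_h(s^j,a^j) lies in [gap_min, H] and Q*_h ≥ Q^{π^j}_h pointwise. Then Σ_{j=1}^k (V*_h(s^j) − Q*_h(s^j,a^j)) ≤ Σ_{n=1}^{N} (C/(2^{n-1} gap_min)) ≤ 2C/gap_min, where N = ⌈log₂(H/gap_min)⌉; i.e., the cumulative optimal-policy suboptimality at step h is at most 2C/gap_min. -/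
/-!
Listing the nonzero gaps in decreasing order `g₁ ≥ g₂ ≥ ⋯ ≥ g_M`, the count bound at threshold
`g_m` gives `m ≤ C / g_m²`, i.e. `g_m ≤ √C / √m`. Hence the cumulative gap is at most
`√C ∑_{m ≤ M} 1/√m ≤ 2 √C √M`, and the count bound at threshold `gapmin` gives
`√M ≤ √C / gapmin`.
-/

open Finset

lemma mul_sqrt_le_sqrt_of_mul_sq_le {n a c : ℝ} (hn : 0 ≤ n) (h : n * a ^ 2 ≤ c) :
    a * √n ≤ √c :=
  calc a * √n ≤ |a| * √n := by gcongr; exact le_abs_self a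
    _ = √(n * a ^ 2) := by rw [Real.sqrt_mul hn, Real.sqrt_sq_eq_abs, mul_comm]
    _ ≤ √c := Real.sqrt_le_sqrt h

lemma two_mul_sqrt_mul_sqrt_add_one_le {x : ℝ} (hx : 0 ≤ x) :
    2 * √x * √(x + 1) ≤ 2 * x + 1 := by
  nlinarith [sq_nonneg (√x - √(x + 1)), Real.sq_sqrt hx, Real.sq_sqrt (by linarith : 0 ≤ x + 1)]

theorem sum_le_two_mul_sqrt_mul_sqrt_card {ι : Type*} [DecidableEq ι] (f : ι → ℝ) (c : ℝ)
    (s : Finset ι) (hcount : ∀ i ∈ s, #{j ∈ s | f i ≤ f j} * f i ^ 2 ≤ c) :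
    ∑ i ∈ s, f i ≤ 2 * √c * √(#s : ℝ) := by
  induction s using Finset.induction_on_min_value f with
  | empty => simp
  | insert a s has hmin ih =>
    have hcount_s : ∀ i ∈ s, #{j ∈ s | f i ≤ f j} * f i ^ 2 ≤ c := fun i hi =>
      le_trans (by gcongr; exact subset_insert a s) (hcount i (mem_insert_of_mem hi))
    -- `f a` is the minimum, so all `#s + 1` elements are counted at threshold `f a`.
    have hfa : f a * √(#s + 1 : ℝ) ≤ √c := by
      refine mul_sqrt_le_sqrt_of_mul_sq_le (by positivity) ?_
      have hall : {j ∈ insert a s | f a ≤ f j} = insert a s :=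
        filter_true_of_mem (by simpa using hmin)
      simpa [hall, card_insert_of_notMem has] using hcount a (mem_insert_self a s)
    have hm := two_mul_sqrt_mul_sqrt_add_one_le (Nat.cast_nonneg (α := ℝ) #s)
    have hpos : 0 < √(#s + 1 : ℝ) := Real.sqrt_pos.mpr (by positivity)
    rw [sum_insert has, card_insert_of_notMem has, Nat.cast_succ]
    refine le_of_mul_le_mul_right ?_ hpos
    nlinarith [ih hcount_s, Real.sqrt_nonneg c, Real.sq_sqrt (by positivity : (0 : ℝ) ≤ #s + 1)]

theorem stmt7 (H gapmin C : ℝ) (hgapmin : 0 < gapmin) (hH : gapmin ≤ H) (hC : 0 < C)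
    (gstar gpi : ℕ → ℝ)
    (hcount : ∀ Δ : ℝ, 0 < Δ → Δ ≤ H → ∀ k : ℕ,
      (((Finset.range k).filter (fun j => Δ ≤ gpi j)).card : ℝ) ≤ C / Δ ^ 2)
    (hvals : ∀ j, gstar j = 0 ∨ (gapmin ≤ gstar j ∧ gstar j ≤ H))
    (hle : ∀ j, gstar j ≤ gpi j)
    (k : ℕ) :
    ∑ j ∈ Finset.range k, gstar j ≤ 2 * C / gapmin := by
  set T := {j ∈ range k | gstar j ≠ 0}
  have hT : ∀ j ∈ T, gapmin ≤ gstar j ∧ gstar j ≤ H := fun j hj =>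
    (hvals j).resolve_left (mem_filter.mp hj).2
  have hcard : ∀ Δ, gapmin ≤ Δ → Δ ≤ H → #{j ∈ T | Δ ≤ gstar j} * Δ ^ 2 ≤ C := by
    intro Δ hΔ hΔH
    have hΔpos : 0 < Δ := hgapmin.trans_le hΔ
    rw [← le_div_iff₀ (by positivity)]
    refine le_trans ?_ (hcount Δ hΔpos hΔH k)
    exact_mod_cast card_le_card fun j hj => by
      simp only [T, mem_filter] at hj ⊢
      exact ⟨hj.1.1, hj.2.trans (hle j)⟩
  have hsum := sum_le_two_mul_sqrt_mul_sqrt_card gstar C T fun i hi =>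
    hcard _ (hT i hi).1 (hT i hi).2
  have hM : gapmin * √(#T : ℝ) ≤ √C := by
    refine mul_sqrt_le_sqrt_of_mul_sq_le (by positivity) ?_
    simpa [filter_true_of_mem fun j hj => (hT j hj).1] using hcard gapmin le_rfl hH
  rw [← sum_filter_ne_zero, le_div_iff₀ hgapmin]
  calc (∑ j ∈ T, gstar j) * gapmin ≤ 2 * √C * (gapmin * √(#T : ℝ)) := by nlinarith
    _ ≤ 2 * √C * √C := by gcongr
    _ = 2 * C := by rw [mul_assoc, Real.mul_self_sqrt hC.le]
end

section
/- Let Λ ∈ ℝ^{d×d} be symmetric positive semidefinite with spectral decomposition Λ = QᵀDQ, and suppose every nonzero eigenvalue of Λ is at least σ > 0. Let k ≥ 1 and ι ∈ ℝ be such that (k−1)σ − ι ≥ σk/2 > 0 and ι > 0. Let B = (k−1)Λ − ι I (interpreted via B = Qᵀ((k−1)D − ι I)Q, invertible since every diagonal entry of (k−1)D − ιI is nonzero). Then for every unit vector u in the column space of Λ (i.e., u = Λx with ‖Λx‖₂ = 1), uᵀ B^{-1} u ≤ 2/(σ k). -/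
/-!
Conjugating by the orthogonal matrix `Qm` reduces everything to the diagonal matrix
`(k - 1) D - ι I`, whose entries are `-ι ≠ 0` on the kernel of `D` and at least `σ k / 2` on the
rest. Since `u = Λ x` has no component along the kernel of `D`, its quadratic form against
`B⁻¹` only sees the entries `≥ σ k / 2`, hence is at most `‖u‖² / (σ k / 2) = 2 / (σ k)`.
-/

open Matrix Finset

namespace Matrix

variable {n : Type*} [Fintype n]

theorem dotProduct_transpose_mul_mul_mulVec {R : Type*} [CommSemiring R] (Q M : Matrix n n R)
    (u : n → R) : u ⬝ᵥ (Qᵀ * M * Q) *ᵥ u = (Q *ᵥ u) ⬝ᵥ M *ᵥ (Q *ᵥ u) := by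
  rw [← mulVec_mulVec, ← mulVec_mulVec, dotProduct_mulVec, vecMul_transpose]

variable [DecidableEq n]

theorem mulVec_dotProduct_mulVec_self_of_transpose_mul_eq_one {R : Type*} [CommSemiring R]
    {Q : Matrix n n R} (hQ : Qᵀ * Q = 1) (u : n → R) : (Q *ᵥ u) ⬝ᵥ (Q *ᵥ u) = u ⬝ᵥ u := by
  simpa [hQ] using (dotProduct_transpose_mul_mul_mulVec Q 1 u).symm

theorem smul_transpose_mul_diagonal_mul_sub_smul_one {R : Type*} [CommRing R] {Q : Matrix n n R}
    (hQ : Qᵀ * Q = 1) (v : n → R) (a b : R) :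
    a • (Qᵀ * diagonal v * Q) - b • 1 = Qᵀ * diagonal (fun i => a * v i - b) * Q := by
  have : diagonal (fun i => a * v i - b) = a • diagonal v - b • 1 := by
    ext i j
    rcases eq_or_ne i j with rfl | hij <;> simp [*]
  rw [this, Matrix.mul_sub, Matrix.sub_mul, Matrix.mul_smul, Matrix.smul_mul, Matrix.mul_smul,
    Matrix.smul_mul, Matrix.mul_one, hQ]

variable {K : Type*} [Field K] {Q : Matrix n n K}

theorem isUnit_transpose_mul_mul_iff (hQ : Qᵀ * Q = 1) (M : Matrix n n K) :
    IsUnit (Qᵀ * M * Q) ↔ IsUnit M := by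
  have hdet : Qᵀ.det * Q.det = 1 := by rw [← det_mul, hQ, det_one]
  rw [isUnit_iff_isUnit_det, isUnit_iff_isUnit_det, det_mul, det_mul, mul_right_comm, hdet,
    one_mul]

theorem inv_transpose_mul_mul (hQ : Qᵀ * Q = 1) (M : Matrix n n K) :
    (Qᵀ * M * Q)⁻¹ = Qᵀ * M⁻¹ * Q := by
  rw [mul_inv_rev, mul_inv_rev, inv_eq_left_inv hQ, ← transpose_nonsing_inv, inv_eq_left_inv hQ,
    transpose_transpose, Matrix.mul_assoc]

theorem inv_diagonal_of_ne_zero {e : n → K} (he : ∀ i, e i ≠ 0) :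
    (diagonal e)⁻¹ = diagonal e⁻¹ :=
  inv_eq_left_inv <| by
    rw [diagonal_mul_diagonal, ← diagonal_one]
    exact congrArg diagonal (funext fun i => inv_mul_cancel₀ (he i))

theorem dotProduct_diagonal_inv_mulVec_le {w e : n → ℝ} {c : ℝ} (hc : 0 < c)
    (h : ∀ i, w i ≠ 0 → c ≤ e i) : w ⬝ᵥ diagonal e⁻¹ *ᵥ w ≤ (w ⬝ᵥ w) / c := by
  simp only [dotProduct, mulVec_diagonal, Pi.inv_apply, sum_div]
  refine sum_le_sum fun i _ => ?_
  rcases eq_or_ne (w i) 0 with hw | hw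
  · simp [hw]
  · rw [div_eq_mul_inv, mul_comm (e i)⁻¹, ← mul_assoc]
    exact mul_le_mul_of_nonneg_left (inv_anti₀ hc (h i hw)) (mul_self_nonneg _)

end Matrix

theorem stmt9_general {d : ℕ} (Qm D Λ : Matrix (Fin d) (Fin d) ℝ)
    (hQ : Qm * Qmᵀ = 1) (hQ' : Qmᵀ * Qm = 1)
    (hD : D.IsDiag)
    (σ : ℝ)
    (heig : ∀ i, D i i = 0 ∨ σ ≤ D i i)
    (hΛ : Λ = Qmᵀ * D * Qm)
    (k ι : ℝ) (hk : 1 ≤ k) (hι : 0 < ι)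
    (hpos : 0 < σ * k / 2)
    (hineq : σ * k / 2 ≤ (k - 1) * σ - ι)
    (B : Matrix (Fin d) (Fin d) ℝ)
    (hB : B = (k - 1) • Λ - ι • (1 : Matrix (Fin d) (Fin d) ℝ)) :
    IsUnit B ∧ ∀ x : Fin d → ℝ, (∑ i, (Λ.mulVec x i) ^ 2) = 1 →
      Λ.mulVec x ⬝ᵥ B⁻¹.mulVec (Λ.mulVec x) ≤ 2 / (σ * k) := by
  set e : Fin d → ℝ := fun i => (k - 1) * D i i - ι
  have he_ge : ∀ i, D i i ≠ 0 → σ * k / 2 ≤ e i := fun i hi => by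
    have := mul_le_mul_of_nonneg_left ((heig i).resolve_left hi) (sub_nonneg.2 hk)
    linarith
  have he_ne : ∀ i, e i ≠ 0 := fun i => by
    rcases eq_or_ne (D i i) 0 with hi | hi
    · simp [e, hi, hι.ne']
    · exact (hpos.trans_le (he_ge i hi)).ne'
  have hB_diag : B = Qmᵀ * diagonal e * Qm := by
    rw [hB, hΛ, ← hD.diagonal_diag, smul_transpose_mul_diagonal_mul_sub_smul_one hQ']
    rfl
  refine ⟨by simpa [hB_diag, isUnit_transpose_mul_mul_iff hQ', Pi.isUnit_iff] using he_ne, ?_⟩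
  intro x hx
  set w := Qm *ᵥ Λ *ᵥ x
  have hw_eq : w = D *ᵥ Qm *ᵥ x := by
    simp only [w, hΛ, mulVec_mulVec, ← Matrix.mul_assoc, hQ, Matrix.one_mul]
  have hw : ∀ i, w i ≠ 0 → D i i ≠ 0 := fun i hi hDi => hi <| by
    rw [hw_eq, ← hD.diagonal_diag, mulVec_diagonal, diag_apply, hDi, zero_mul]
  have hw_norm : w ⬝ᵥ w = 1 := by
    rw [mulVec_dotProduct_mulVec_self_of_transpose_mul_eq_one hQ', ← hx, dotProduct]
    simp only [sq]
  calc Λ *ᵥ x ⬝ᵥ B⁻¹ *ᵥ Λ *ᵥ x = w ⬝ᵥ diagonal e⁻¹ *ᵥ w := by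
        rw [hB_diag, inv_transpose_mul_mul hQ', inv_diagonal_of_ne_zero he_ne,
          dotProduct_transpose_mul_mul_mulVec]
    _ ≤ (w ⬝ᵥ w) / (σ * k / 2) :=
        dotProduct_diagonal_inv_mulVec_le hpos fun i hi => he_ge i (hw i hi)
    _ = 2 / (σ * k) := by rw [hw_norm]; field_simp

theorem stmt9 {d : ℕ} (Qm D Λ : Matrix (Fin d) (Fin d) ℝ)
    (hQ : Qm * Qmᵀ = 1) (hQ' : Qmᵀ * Qm = 1)
    (hD : D.IsDiag) (hDnn : ∀ i, 0 ≤ D i i)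
    (σ : ℝ) (hσ : 0 < σ)
    (heig : ∀ i, D i i = 0 ∨ σ ≤ D i i)
    (hΛ : Λ = Qmᵀ * D * Qm)
    (k ι : ℝ) (hk : 1 ≤ k) (hι : 0 < ι)
    (hpos : 0 < σ * k / 2)
    (hineq : σ * k / 2 ≤ (k - 1) * σ - ι)
    (B : Matrix (Fin d) (Fin d) ℝ)
    (hB : B = (k - 1) • Λ - ι • (1 : Matrix (Fin d) (Fin d) ℝ)) :
    IsUnit B ∧ ∀ x : Fin d → ℝ, (∑ i, (Λ.mulVec x i) ^ 2) = 1 →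
      Λ.mulVec x ⬝ᵥ B⁻¹.mulVec (Λ.mulVec x) ≤ 2 / (σ * k) :=
  stmt9_general Qm D Λ hQ hQ' hD σ heig hΛ k ι hk hι hpos hineq B hB
end
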